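/- Let H be an N×N Hermitian complex matrix, fix integers n ≥ 1 and P ≥ 1, and set c_n = 3·2^{n-1} - 2. Define the matrices S_n(H) = Σ_{l=2^{n-1}}^{2^n - 1} (H - (2l-1)πi·I)^{-1} and T_n^P(H) = Σ_{l=2^{n-1}}^{2^n - 1} Σ_{ν=0}^{P-1} ((2l - 1 - c_n)πi)^ν · (H - c_n πi·I)^{-(ν+1)} (all inverses exist since H is Hermitian and the shifts are nonreal). Then every eigenvalue λ of S_n(H) - T_n^P(H) satisfies |λ| ≤ (1/(2π)) · (1/3^P). -/

import Mathlib

open Complex Real Matrix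

lemma geom_remainder (z w : ℂ) (hz : z ≠ 0) (hzw : z - w ≠ 0) (P : ℕ) :
    (z - w)⁻¹ - ∑ ν ∈ Finset.range P, w ^ ν * (z⁻¹) ^ (ν + 1)
      = w ^ P * (z⁻¹) ^ P * (z - w)⁻¹ := by
  induction P with
  | zero => simp
  | succ P ih =>
    rw [Finset.sum_range_succ, ← sub_sub, ih]
    field_simp
    linear_combination (-(w ^ P * z⁻¹ ^ P)) * mul_inv_cancel₀ hz

lemma term_bound (x c a : ℝ) (hc : 0 < c) (ha : 0 < a) (P : ℕ) :
    ‖((x : ℂ) - (a : ℝ) * (Real.pi : ℂ) * Complex.I)⁻¹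
      - ∑ ν ∈ Finset.range P, (((a - c : ℝ) : ℂ) * (Real.pi : ℂ) * Complex.I) ^ ν *
          (((x : ℂ) - (c : ℝ) * (Real.pi : ℂ) * Complex.I)⁻¹) ^ (ν + 1)‖
    ≤ (|a - c| / c) ^ P / (a * Real.pi) := by
  have hpi := Real.pi_pos
  set z : ℂ := (x : ℂ) - (c : ℝ) * (Real.pi : ℂ) * Complex.I with hzdef
  set w : ℂ := ((a - c : ℝ) : ℂ) * (Real.pi : ℂ) * Complex.I with hwdef
  have hzim : z.im = -(c * Real.pi) := by simp [hzdef]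
  have hzwval : z - w = (x : ℂ) - (a : ℝ) * (Real.pi : ℂ) * Complex.I := by
    rw [hzdef, hwdef]; push_cast; ring
  have hzwim : (z - w).im = -(a * Real.pi) := by
    rw [hzwval]; simp
  have hz : z ≠ 0 := by
    intro h; rw [h] at hzim; simp at hzim
    rcases hzim with h | h <;> nlinarith
  have hzw : z - w ≠ 0 := by
    intro h; rw [h] at hzwim; simp at hzwim
    rcases hzwim with h | h <;> nlinarith
  have habsz : c * Real.pi ≤ ‖z‖ := by
    calc c * Real.pi = |z.im| := by rw [hzim, abs_neg, _root_.abs_of_nonneg (by positivity)]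
    _ ≤ ‖z‖ := Complex.abs_im_le_norm z
  have habszw : a * Real.pi ≤ ‖z - w‖ := by
    calc a * Real.pi = |(z - w).im| := by
          rw [hzwim, abs_neg, _root_.abs_of_nonneg (by positivity)]
    _ ≤ ‖z - w‖ := Complex.abs_im_le_norm _
  have habsw : ‖w‖ = |a - c| * Real.pi := by
    rw [hwdef]
    rw [norm_mul, norm_mul, Complex.norm_real, Complex.norm_I, Complex.norm_real, mul_one, Real.norm_eq_abs, Real.norm_eq_abs, _root_.abs_of_nonneg hpi.le]
  rw [← hzwval, geom_remainder z w hz hzw]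
  rw [norm_mul, norm_mul, norm_pow, norm_pow, norm_inv, norm_inv, habsw]
  have h1 : (|a - c| * Real.pi) ^ P * ((‖z‖)⁻¹) ^ P * (‖z - w‖)⁻¹
      ≤ (|a - c| * Real.pi) ^ P * ((c * Real.pi)⁻¹) ^ P * (a * Real.pi)⁻¹ := by
    gcongr
  refine h1.trans_eq ?_
  rw [div_pow, mul_pow, inv_pow, mul_pow]
  field_simp

lemma sum_odd_real (k : ℕ) : ∑ j ∈ Finset.range k, (2 * (j : ℝ) + 1) = k ^ 2 := by
  induction k with
  | zero => simp
  | succ k ih => rw [Finset.sum_range_succ, ih]; push_cast; ring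

lemma sum_id_real (k : ℕ) : ∑ j ∈ Finset.range k, (j : ℝ) = k * (k - 1) / 2 := by
  induction k with
  | zero => simp
  | succ k ih => rw [Finset.sum_range_succ, ih]; push_cast; ring

lemma sum_abs_d (k : ℕ) :
    ∑ j ∈ Finset.range (2 * k), |2 * (j : ℝ) + 1 - 2 * k| = 2 * k ^ 2 := by
  have hsplit : Finset.range (2 * k) = Finset.Ico 0 (2 * k) := by
    rw [Finset.range_eq_Ico]
  rw [hsplit, ← Finset.sum_Ico_consecutive _ (Nat.zero_le k) (by omega : k ≤ 2 * k)]
  rw [← Finset.range_eq_Ico, Finset.sum_Ico_eq_sum_range]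
  have h1 : ∑ j ∈ Finset.range k, |2 * (j : ℝ) + 1 - 2 * k|
      = ∑ j ∈ Finset.range k, (2 * (k : ℝ) - 2 * j - 1) := by
    apply Finset.sum_congr rfl
    intro j hj
    have hj' : (j : ℝ) ≤ k - 1 := by
      have := Finset.mem_range.mp hj
      have : (j : ℝ) + 1 ≤ k := by exact_mod_cast this
      linarith
    rw [abs_of_nonpos (by linarith)]; ring
  have h2 : ∑ j ∈ Finset.range (2 * k - k), |2 * ((k + j : ℕ) : ℝ) + 1 - 2 * k|
      = ∑ j ∈ Finset.range k, (2 * (j : ℝ) + 1) := by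
    have hk : 2 * k - k = k := by omega
    rw [hk]
    apply Finset.sum_congr rfl
    intro j hj
    push_cast
    have : 2 * ((k : ℝ) + j) + 1 - 2 * k = 2 * j + 1 := by ring
    rw [this, _root_.abs_of_nonneg (by positivity)]
  rw [h1, h2, sum_odd_real]
  have := sum_id_real k
  rw [Finset.sum_sub_distrib, Finset.sum_sub_distrib, Finset.sum_const, Finset.sum_const]
  simp only [← Finset.mul_sum, this, Finset.card_range, nsmul_eq_mul]
  ring

lemma sum_abs_bound (m : ℕ) (hm : m = 1 ∨ ∃ k : ℕ, 1 ≤ k ∧ m = 2 * k) :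
    ∑ l ∈ Finset.Icc m (2 * m - 1), |2 * (l : ℝ) - 1 - (3 * (m : ℝ) - 2)|
      ≤ (3 * (m : ℝ) - 2) * (2 * (m : ℝ) - 1) / 6 := by
  have hm1 : 1 ≤ m := by rcases hm with h | ⟨k, hk, h⟩ <;> omega
  have hIcc : Finset.Icc m (2 * m - 1) = Finset.Ico m (2 * m) := by
    rw [← Finset.Ico_add_one_right_eq_Icc]
    congr 1
    omega
  rw [hIcc, Finset.sum_Ico_eq_sum_range]
  have hmm : 2 * m - m = m := by omega
  rw [hmm]
  have hterm : ∀ j ∈ Finset.range m,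
      |2 * ((m + j : ℕ) : ℝ) - 1 - (3 * (m : ℝ) - 2)| = |2 * (j : ℝ) + 1 - m| := by
    intro j hj
    congr 1
    push_cast
    ring
  rw [Finset.sum_congr rfl hterm]
  rcases hm with h | ⟨k, hk, h⟩
  · subst h; norm_num
  · subst h
    have hsum := sum_abs_d k
    have : ∑ j ∈ Finset.range (2 * k), |2 * (j : ℝ) + 1 - (2 * k : ℕ)|
        = 2 * (k : ℝ) ^ 2 := by
      rw [← hsum]
      apply Finset.sum_congr rfl
      intro j hj
      congr 1
      push_cast
      ring
    rw [this]
    have hk' : (1 : ℝ) ≤ k := by exact_mod_cast hk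
    push_cast
    nlinarith [sq_nonneg ((k : ℝ) - 1)]

lemma scalar_bound_aux (m P : ℕ) (hm : 1 ≤ m)
    (hsum : ∑ l ∈ Finset.Icc m (2 * m - 1), |2 * (l : ℝ) - 1 - (3 * (m : ℝ) - 2)|
        ≤ (3 * (m : ℝ) - 2) * (2 * (m : ℝ) - 1) / 6) (hP : 1 ≤ P) :
    ∑ l ∈ Finset.Icc m (2 * m - 1),
        (|2 * (l : ℝ) - 1 - (3 * (m : ℝ) - 2)| / (3 * (m : ℝ) - 2)) ^ P
          / ((2 * (l : ℝ) - 1) * Real.pi)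
      ≤ 1 / (2 * Real.pi) * (1 / 3 ^ P) := by
  have hpi := Real.pi_pos
  have hm' : (1 : ℝ) ≤ (m : ℝ) := by exact_mod_cast hm
  have hc0 : (0 : ℝ) < 3 * (m : ℝ) - 2 := by linarith
  have h2m0 : (0 : ℝ) < 2 * (m : ℝ) - 1 := by linarith
  set c : ℝ := 3 * (m : ℝ) - 2 with hcdef
  have step1 : ∑ l ∈ Finset.Icc m (2 * m - 1),
        (|2 * (l : ℝ) - 1 - c| / c) ^ P / ((2 * (l : ℝ) - 1) * Real.pi)
      ≤ ∑ l ∈ Finset.Icc m (2 * m - 1),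
        (1 / 3 ^ P * (3 / (c * (2 * (m : ℝ) - 1) * Real.pi))) * |2 * (l : ℝ) - 1 - c| := by
    apply Finset.sum_le_sum
    intro l hl
    obtain ⟨hl1, hl2⟩ := Finset.mem_Icc.mp hl
    have hl1' : (m : ℝ) ≤ l := by exact_mod_cast hl1
    have hl2' : (l : ℝ) ≤ 2 * (m : ℝ) - 1 := by
      have h := Nat.cast_le (α := ℝ).mpr hl2
      calc (l : ℝ) ≤ ((2 * m - 1 : ℕ) : ℝ) := h
      _ ≤ 2 * (m : ℝ) - 1 := by
          push_cast [Nat.cast_sub (by omega : 1 ≤ 2 * m)]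
          linarith
    have ha0 : (0 : ℝ) < 2 * (l : ℝ) - 1 := by linarith
    have ha2m : 2 * (m : ℝ) - 1 ≤ 2 * (l : ℝ) - 1 := by linarith
    set d : ℝ := 2 * (l : ℝ) - 1 - c with hddef
    have hd3 : 3 * |d| ≤ c := by
      have hdle : |d| ≤ (m : ℝ) - 1 := by
        rw [abs_le]
        constructor <;> (rw [hddef, hcdef]; try linarith)
      rw [hcdef]; linarith
    have habs0 : (0 : ℝ) ≤ |d| := abs_nonneg d
    have e1 : (|d| / c) ^ P ≤ (3 * |d| / c) / 3 ^ P := by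
      have hq : |d| / c = (3 * |d| / c) / 3 := by ring
      rw [hq, div_pow]
      gcongr
      exact pow_le_of_le_one (by positivity) ((div_le_one hc0).mpr hd3) (by omega)
    calc (|d| / c) ^ P / ((2 * (l : ℝ) - 1) * Real.pi)
        ≤ ((3 * |d| / c) / 3 ^ P) / ((2 * (l : ℝ) - 1) * Real.pi) := by gcongr
      _ ≤ ((3 * |d| / c) / 3 ^ P) / ((2 * (m : ℝ) - 1) * Real.pi) := by
          apply div_le_div_of_nonneg_left (by positivity) (by positivity)
          nlinarith
      _ = (1 / 3 ^ P * (3 / (c * (2 * (m : ℝ) - 1) * Real.pi))) * |d| := by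
          simp only [div_eq_mul_inv, mul_inv, one_mul]
          ring
  refine step1.trans ?_
  rw [← Finset.mul_sum]
  have step2 : (1 / 3 ^ P * (3 / (c * (2 * (m : ℝ) - 1) * Real.pi))) *
        (∑ l ∈ Finset.Icc m (2 * m - 1), |2 * (l : ℝ) - 1 - c|)
      ≤ (1 / 3 ^ P * (3 / (c * (2 * (m : ℝ) - 1) * Real.pi))) *
        (c * (2 * (m : ℝ) - 1) / 6) := by
    gcongr
  refine step2.trans_eq ?_
  rw [div_mul_eq_mul_div, mul_comm]
  field_simp
  ring

lemma scalar_bound (x : ℝ) (n P : ℕ) (hn : 1 ≤ n) (hP : 1 ≤ P) :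
    ‖(∑ l ∈ Finset.Icc (2 ^ (n - 1) : ℕ) (2 ^ n - 1),
        ((x : ℂ) - (2 * (l : ℂ) - 1) * (Real.pi : ℂ) * Complex.I)⁻¹) -
      ∑ l ∈ Finset.Icc (2 ^ (n - 1) : ℕ) (2 ^ n - 1), ∑ ν ∈ Finset.range P,
        ((2 * (l : ℂ) - 1 - (3 * 2 ^ (n - 1) - 2)) * (Real.pi : ℂ) * Complex.I) ^ ν *
          (((x : ℂ) - (3 * 2 ^ (n - 1) - 2 : ℂ) * (Real.pi : ℂ) * Complex.I)⁻¹) ^ (ν + 1)‖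
    ≤ 1 / (2 * Real.pi) * (1 / 3 ^ P) := by
  have hm : 1 ≤ 2 ^ (n - 1) := Nat.one_le_two_pow
  set m : ℕ := 2 ^ (n - 1) with hmdef
  have h2n : 2 ^ n - 1 = 2 * m - 1 := by
    have : 2 ^ n = 2 * m := by
      rw [hmdef, ← pow_succ']
      congr 1
      omega
    omega
  have hm' : (1 : ℝ) ≤ (m : ℝ) := by exact_mod_cast hm
  have hc0 : (0 : ℝ) < 3 * (m : ℝ) - 2 := by linarith
  have hcC : (3 * (2 : ℂ) ^ (n - 1) - 2 : ℂ) = (((3 * (m : ℝ) - 2 : ℝ)) : ℂ) := by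
    push_cast [hmdef]
    ring
  rw [h2n, ← Finset.sum_sub_distrib]
  refine le_trans (norm_sum_le _ _) ?_
  have key : ∀ l ∈ Finset.Icc m (2 * m - 1),
      ‖((x : ℂ) - (2 * (l : ℂ) - 1) * (Real.pi : ℂ) * Complex.I)⁻¹ -
        ∑ ν ∈ Finset.range P,
          ((2 * (l : ℂ) - 1 - (3 * 2 ^ (n - 1) - 2)) * (Real.pi : ℂ) * Complex.I) ^ ν *
            (((x : ℂ) - (3 * 2 ^ (n - 1) - 2 : ℂ) * (Real.pi : ℂ) * Complex.I)⁻¹) ^ (ν + 1)‖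
      ≤ (|2 * (l : ℝ) - 1 - (3 * (m : ℝ) - 2)| / (3 * (m : ℝ) - 2)) ^ P
          / ((2 * (l : ℝ) - 1) * Real.pi) := by
    intro l hl
    obtain ⟨hl1, hl2⟩ := Finset.mem_Icc.mp hl
    have hl1' : (m : ℝ) ≤ l := by exact_mod_cast hl1
    have ha0 : (0 : ℝ) < 2 * (l : ℝ) - 1 := by linarith
    have e1 : (2 * (l : ℂ) - 1) = (((2 * (l : ℝ) - 1 : ℝ)) : ℂ) := by push_cast; ring
    have e2 : (2 * (l : ℂ) - 1 - (3 * 2 ^ (n - 1) - 2) : ℂ)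
        = ((((2 * (l : ℝ) - 1) - (3 * (m : ℝ) - 2) : ℝ)) : ℂ) := by
      rw [hcC]
      push_cast
      ring
    rw [e2, e1, hcC]
    exact term_bound x (3 * (m : ℝ) - 2) (2 * (l : ℝ) - 1) hc0 ha0 P
  refine le_trans (Finset.sum_le_sum key) ?_
  apply scalar_bound_aux m P hm _ hP
  apply sum_abs_bound
  rcases Nat.eq_or_lt_of_le hn with h | h
  · left; rw [hmdef, ← h]; norm_num
  · right
    exact ⟨2 ^ (n - 2), Nat.one_le_two_pow, by rw [hmdef, ← pow_succ']; congr 1; omega⟩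

lemma diagSum {N : ℕ} {ι : Type*} (s : Finset ι) (g : ι → Fin N → ℂ) :
    ∑ l ∈ s, Matrix.diagonal (g l) = Matrix.diagonal (fun i => ∑ l ∈ s, g l i) := by
  classical
  induction s using Finset.induction_on with
  | empty => simp
  | insert _ _ h ih =>
    rw [Finset.sum_insert h, ih, Matrix.diagonal_add]
    funext i
    simp [Finset.sum_insert h]

variable {N : ℕ}

lemma mconj_mul (U : Matrix (Fin N) (Fin N) ℂ) (h1 : star U * U = 1)
    (X Y : Matrix (Fin N) (Fin N) ℂ) :
    (U * X * star U) * (U * Y * star U) = U * (X * Y) * star U := by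
  have hcancel : ∀ Z : Matrix (Fin N) (Fin N) ℂ, star U * (U * Z) = Z := fun Z => by
    rw [← Matrix.mul_assoc, h1, Matrix.one_mul]
  simp only [Matrix.mul_assoc]
  rw [hcancel]

lemma mconj_pow (U : Matrix (Fin N) (Fin N) ℂ) (h1 : star U * U = 1) (h2 : U * star U = 1)
    (X : Matrix (Fin N) (Fin N) ℂ) (k : ℕ) :
    (U * X * star U) ^ k = U * X ^ k * star U := by
  induction k with
  | zero => simp [pow_zero, Matrix.mul_one, h2]
  | succ k ih => rw [pow_succ, ih, mconj_mul U h1, ← pow_succ]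

lemma mconj_diag_inv (U : Matrix (Fin N) (Fin N) ℂ) (h1 : star U * U = 1) (h2 : U * star U = 1)
    (f : Fin N → ℂ) (hf : ∀ i, f i ≠ 0) :
    IsUnit (U * Matrix.diagonal f * star U) ∧
      (U * Matrix.diagonal f * star U)⁻¹
        = U * Matrix.diagonal (fun i => (f i)⁻¹) * star U := by
  have hdd : Matrix.diagonal f * Matrix.diagonal (fun i => (f i)⁻¹) = 1 := by
    rw [Matrix.diagonal_mul_diagonal]
    convert Matrix.diagonal_one using 2
    funext i
    exact mul_inv_cancel₀ (hf _)
  have hdd' : Matrix.diagonal (fun i => (f i)⁻¹) * Matrix.diagonal f = 1 := by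
    rw [Matrix.diagonal_mul_diagonal]
    convert Matrix.diagonal_one using 2
    funext i
    exact inv_mul_cancel₀ (hf _)
  have hmul : (U * Matrix.diagonal f * star U) *
      (U * Matrix.diagonal (fun i => (f i)⁻¹) * star U) = 1 := by
    rw [mconj_mul U h1, hdd, Matrix.mul_one, h2]
  have hmul' : (U * Matrix.diagonal (fun i => (f i)⁻¹) * star U) *
      (U * Matrix.diagonal f * star U) = 1 := by
    rw [mconj_mul U h1, hdd', Matrix.mul_one, h2]
  exact ⟨⟨⟨_, _, hmul, hmul'⟩, rfl⟩, Matrix.inv_eq_right_inv hmul⟩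

lemma mconj_shift (U : Matrix (Fin N) (Fin N) ℂ) (h2 : U * star U = 1)
    (g : Fin N → ℂ) (μ : ℂ) :
    (U * Matrix.diagonal g * star U) - μ • 1
      = U * Matrix.diagonal (fun i => g i - μ) * star U := by
  have hμ : μ • (1 : Matrix (Fin N) (Fin N) ℂ)
      = U * Matrix.diagonal (fun _ => μ) * star U := by
    rw [← Matrix.smul_one_eq_diagonal, Matrix.mul_smul, Matrix.mul_one, Matrix.smul_mul, h2]
  rw [hμ, ← Matrix.sub_mul, ← Matrix.mul_sub, Matrix.diagonal_sub]


/-- Matrix form of the multipole approximation bound: for a Hermitian matrix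
`H`, with `c_n = 3·2^{n-1} - 2`, the resolvents exist and every eigenvalue of
`S_n(H) - T_n^P(H)` has modulus at most `(1/(2π))·(1/3^P)`, where
`S_n(H) = ∑_{l=2^{n-1}}^{2^n-1} (H - (2l-1)πi·I)⁻¹` and
`T_n^P(H) = ∑_{l=2^{n-1}}^{2^n-1} ∑_{ν=0}^{P-1} ((2l-1-c_n)πi)^ν·(H - c_nπi·I)^{-(ν+1)}`. -/
theorem stmt_11 {N : ℕ} (H : Matrix (Fin N) (Fin N) ℂ) (hH : H.IsHermitian)
    (n P : ℕ) (hn : 1 ≤ n) (hP : 1 ≤ P) :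
    (∀ l ∈ Finset.Icc (2 ^ (n - 1) : ℕ) (2 ^ n - 1),
      IsUnit (H - ((2 * (l : ℂ) - 1) * (Real.pi : ℂ) * Complex.I) • 1)) ∧
    IsUnit (H - ((3 * 2 ^ (n - 1) - 2 : ℂ) * (Real.pi : ℂ) * Complex.I) • 1) ∧
    ∀ lam ∈ spectrum ℂ
        ((∑ l ∈ Finset.Icc (2 ^ (n - 1) : ℕ) (2 ^ n - 1),
            (H - ((2 * (l : ℂ) - 1) * (Real.pi : ℂ) * Complex.I) • 1)⁻¹) -
          ∑ l ∈ Finset.Icc (2 ^ (n - 1) : ℕ) (2 ^ n - 1), ∑ ν ∈ Finset.range P,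
            ((2 * (l : ℂ) - 1 - (3 * 2 ^ (n - 1) - 2)) * (Real.pi : ℂ) * Complex.I) ^ ν •
              ((H - ((3 * 2 ^ (n - 1) - 2 : ℂ) * (Real.pi : ℂ) * Complex.I) • 1)⁻¹) ^ (ν + 1)),
      ‖lam‖ ≤ 1 / (2 * Real.pi) * (1 / 3 ^ P) := by
  have hpi := Real.pi_pos
  set U : Matrix (Fin N) (Fin N) ℂ := ↑hH.eigenvectorUnitary with hUdef
  have hU2 : U * star U = 1 := Matrix.mem_unitaryGroup_iff.mp hH.eigenvectorUnitary.2
  have hU1 : star U * U = 1 := Matrix.mem_unitaryGroup_iff'.mp hH.eigenvectorUnitary.2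
  set E : Fin N → ℝ := hH.eigenvalues with hEdef
  have hspec : H = U * Matrix.diagonal (fun i => ((E i : ℝ) : ℂ)) * star U :=
    hH.spectral_theorem
  have hres : ∀ μ : ℂ, μ.im ≠ 0 →
      IsUnit (H - μ • 1) ∧
        (H - μ • 1)⁻¹ = U * Matrix.diagonal (fun i => ((E i : ℂ) - μ)⁻¹) * star U := by
    intro μ hμ
    have hne : ∀ i, ((E i : ℂ) - μ) ≠ 0 := by
      intro i h
      apply hμ
      have := congrArg Complex.im h
      simpa using this.symm
    have hshift : H - μ • 1 = U * Matrix.diagonal (fun i => (E i : ℂ) - μ) * star U := by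
      rw [hspec, mconj_shift U hU2]
    rw [hshift]
    exact mconj_diag_inv U hU1 hU2 _ hne
  have hm : 1 ≤ 2 ^ (n - 1) := Nat.one_le_two_pow
  have himl : ∀ l ∈ Finset.Icc (2 ^ (n - 1) : ℕ) (2 ^ n - 1),
      ((2 * (l : ℂ) - 1) * (Real.pi : ℂ) * Complex.I).im ≠ 0 := by
    intro l hl
    have hl1 : 2 ^ (n - 1) ≤ l := (Finset.mem_Icc.mp hl).1
    have hl1' : (1 : ℝ) ≤ (l : ℝ) := by exact_mod_cast le_trans hm hl1
    have heq : ((2 * (l : ℂ) - 1) * (Real.pi : ℂ) * Complex.I).im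
        = (2 * (l : ℝ) - 1) * Real.pi := by
      simp [Complex.mul_im, Complex.mul_re]
    rw [heq]
    have h0 : (0 : ℝ) < 2 * (l : ℝ) - 1 := by linarith
    exact (mul_pos h0 hpi).ne'
  have himc : ((3 * 2 ^ (n - 1) - 2 : ℂ) * (Real.pi : ℂ) * Complex.I).im ≠ 0 := by
    have hm' : (1 : ℝ) ≤ (2 : ℝ) ^ (n - 1) := by
      have : ((1 : ℕ) : ℝ) ≤ ((2 ^ (n - 1) : ℕ) : ℝ) := by exact_mod_cast hm
      push_cast at this
      linarith
    have hcast : (3 * 2 ^ (n - 1) - 2 : ℂ) = (((3 * (2 : ℝ) ^ (n - 1) - 2 : ℝ)) : ℂ) := by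
      push_cast; ring
    have heq : ((3 * 2 ^ (n - 1) - 2 : ℂ) * (Real.pi : ℂ) * Complex.I).im
        = (3 * (2 : ℝ) ^ (n - 1) - 2) * Real.pi := by
      rw [hcast]
      simp only [Complex.mul_im, Complex.mul_re, Complex.I_re, Complex.I_im,
        Complex.ofReal_re, Complex.ofReal_im]
      ring
    rw [heq]
    have h0 : (0 : ℝ) < 3 * (2 : ℝ) ^ (n - 1) - 2 := by linarith
    exact (mul_pos h0 hpi).ne'
  refine ⟨fun l hl => (hres _ (himl l hl)).1, (hres _ himc).1, ?_⟩
  -- rewrite the big matrix as a conjugated diagonal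
  set g : Fin N → ℂ := fun i =>
    (∑ l ∈ Finset.Icc (2 ^ (n - 1) : ℕ) (2 ^ n - 1),
        ((E i : ℂ) - (2 * (l : ℂ) - 1) * (Real.pi : ℂ) * Complex.I)⁻¹) -
      ∑ l ∈ Finset.Icc (2 ^ (n - 1) : ℕ) (2 ^ n - 1), ∑ ν ∈ Finset.range P,
        ((2 * (l : ℂ) - 1 - (3 * 2 ^ (n - 1) - 2)) * (Real.pi : ℂ) * Complex.I) ^ ν *
          (((E i : ℂ) - (3 * 2 ^ (n - 1) - 2 : ℂ) * (Real.pi : ℂ) * Complex.I)⁻¹) ^ (ν + 1)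
    with hgdef
  have hS : (∑ l ∈ Finset.Icc (2 ^ (n - 1) : ℕ) (2 ^ n - 1),
      (H - ((2 * (l : ℂ) - 1) * (Real.pi : ℂ) * Complex.I) • 1)⁻¹)
      = U * Matrix.diagonal (fun i => ∑ l ∈ Finset.Icc (2 ^ (n - 1) : ℕ) (2 ^ n - 1),
          ((E i : ℂ) - (2 * (l : ℂ) - 1) * (Real.pi : ℂ) * Complex.I)⁻¹) * star U := by
    rw [Finset.sum_congr rfl (fun l hl => (hres _ (himl l hl)).2)]
    rw [← Finset.sum_mul, ← Finset.mul_sum, _root_.diagSum]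
  have hT : (∑ l ∈ Finset.Icc (2 ^ (n - 1) : ℕ) (2 ^ n - 1), ∑ ν ∈ Finset.range P,
      ((2 * (l : ℂ) - 1 - (3 * 2 ^ (n - 1) - 2)) * (Real.pi : ℂ) * Complex.I) ^ ν •
        ((H - ((3 * 2 ^ (n - 1) - 2 : ℂ) * (Real.pi : ℂ) * Complex.I) • 1)⁻¹) ^ (ν + 1))
      = U * Matrix.diagonal (fun i =>
          ∑ l ∈ Finset.Icc (2 ^ (n - 1) : ℕ) (2 ^ n - 1), ∑ ν ∈ Finset.range P,
            ((2 * (l : ℂ) - 1 - (3 * 2 ^ (n - 1) - 2)) * (Real.pi : ℂ) * Complex.I) ^ ν *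
              (((E i : ℂ) - (3 * 2 ^ (n - 1) - 2 : ℂ) * (Real.pi : ℂ) * Complex.I)⁻¹) ^ (ν + 1))
          * star U := by
    have hinner : ∀ (l : ℕ) (ν : ℕ),
        ((2 * (l : ℂ) - 1 - (3 * 2 ^ (n - 1) - 2)) * (Real.pi : ℂ) * Complex.I) ^ ν •
          ((H - ((3 * 2 ^ (n - 1) - 2 : ℂ) * (Real.pi : ℂ) * Complex.I) • 1)⁻¹) ^ (ν + 1)
        = U * Matrix.diagonal (fun i =>
            ((2 * (l : ℂ) - 1 - (3 * 2 ^ (n - 1) - 2)) * (Real.pi : ℂ) * Complex.I) ^ ν *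
              (((E i : ℂ) - (3 * 2 ^ (n - 1) - 2 : ℂ) * (Real.pi : ℂ) * Complex.I)⁻¹) ^ (ν + 1))
            * star U := by
      intro l ν
      rw [(hres _ himc).2, mconj_pow U hU1 hU2, Matrix.diagonal_pow,
        ← Matrix.smul_mul, ← Matrix.mul_smul, ← Matrix.diagonal_smul]
      have hdiageq : ((2 * (l : ℂ) - 1 - (3 * 2 ^ (n - 1) - 2)) * (Real.pi : ℂ) * Complex.I) ^ ν •
            ((fun i => (((E i : ℂ) - (3 * 2 ^ (n - 1) - 2 : ℂ) * (Real.pi : ℂ) * Complex.I)⁻¹)) ^ (ν + 1))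
          = (fun i => ((2 * (l : ℂ) - 1 - (3 * 2 ^ (n - 1) - 2)) * (Real.pi : ℂ) * Complex.I) ^ ν *
              (((E i : ℂ) - (3 * 2 ^ (n - 1) - 2 : ℂ) * (Real.pi : ℂ) * Complex.I)⁻¹) ^ (ν + 1)) := by
        funext i
        simp [Pi.pow_apply, Pi.smul_apply, smul_eq_mul]
      rw [hdiageq]
    have hstep : ∀ l : ℕ, ∑ ν ∈ Finset.range P,
        ((2 * (l : ℂ) - 1 - (3 * 2 ^ (n - 1) - 2)) * (Real.pi : ℂ) * Complex.I) ^ ν •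
          ((H - ((3 * 2 ^ (n - 1) - 2 : ℂ) * (Real.pi : ℂ) * Complex.I) • 1)⁻¹) ^ (ν + 1)
        = U * Matrix.diagonal (fun i => ∑ ν ∈ Finset.range P,
            ((2 * (l : ℂ) - 1 - (3 * 2 ^ (n - 1) - 2)) * (Real.pi : ℂ) * Complex.I) ^ ν *
              (((E i : ℂ) - (3 * 2 ^ (n - 1) - 2 : ℂ) * (Real.pi : ℂ) * Complex.I)⁻¹) ^ (ν + 1))
            * star U := by
      intro l
      rw [Finset.sum_congr rfl (fun ν _ => hinner l ν), ← Finset.sum_mul, ← Finset.mul_sum,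
        _root_.diagSum]
    rw [Finset.sum_congr rfl (fun l _ => hstep l), ← Finset.sum_mul, ← Finset.mul_sum,
      _root_.diagSum]
  have hM : (∑ l ∈ Finset.Icc (2 ^ (n - 1) : ℕ) (2 ^ n - 1),
      (H - ((2 * (l : ℂ) - 1) * (Real.pi : ℂ) * Complex.I) • 1)⁻¹) -
        (∑ l ∈ Finset.Icc (2 ^ (n - 1) : ℕ) (2 ^ n - 1), ∑ ν ∈ Finset.range P,
          ((2 * (l : ℂ) - 1 - (3 * 2 ^ (n - 1) - 2)) * (Real.pi : ℂ) * Complex.I) ^ ν •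
            ((H - ((3 * 2 ^ (n - 1) - 2 : ℂ) * (Real.pi : ℂ) * Complex.I) • 1)⁻¹) ^ (ν + 1))
      = U * Matrix.diagonal g * star U := by
    rw [hS, hT, ← Matrix.sub_mul, ← Matrix.mul_sub, Matrix.diagonal_sub]
  intro lam hlam
  rw [hM] at hlam
  set u : (Matrix (Fin N) (Fin N) ℂ)ˣ := ⟨U, star U, hU2, hU1⟩ with hudef
  have hu : U * Matrix.diagonal g * star U
      = (↑u : Matrix (Fin N) (Fin N) ℂ) * Matrix.diagonal g * (↑u⁻¹ : Matrix (Fin N) (Fin N) ℂ) :=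
    rfl
  rw [hu, spectrum.units_conjugate, spectrum_diagonal] at hlam
  obtain ⟨i, rfl⟩ := hlam
  exact scalar_bound (E i) n P hn hP
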